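/- arXiv:2507.12785 — 4 statements merged into one kernel-verified Lean document; each statement's English description precedes it below -/
import Mathlib

section
/- Let g = k₀ ⊕ p₀ = k₁ ⊕ p₁ be the canonical decompositions of a compact semisimple Lie algebra for two involutions θ₀, θ₁ (not assumed to commute), and let Lᵢ = M ∩ pᵢ for an adjoint orbit M. If x ∈ L₀ ∩ L₁ satisfies [g, x] ∩ p₀ ∩ p₁ = {0}, then [x, y] = 0 for every y ∈ p₀ ∩ p₁. -/
/-- Let `g = k₀ ⊕ p₀ = k₁ ⊕ p₁` be the canonical decompositions of a
compact semisimple Lie algebra for two involutions `θ₀, θ₁` (not assumed to commute), with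
`pᵢ = {X | θᵢ X = -X}`, and let `Lᵢ = M ∩ pᵢ` for an adjoint orbit `M`.  If
`x ∈ L₀ ∩ L₁` satisfies `[g, x] ∩ p₀ ∩ p₁ = {0}`, then `[x, y] = 0` for every
`y ∈ p₀ ∩ p₁`.  The inner product `B` is `Ad`-invariant (`B([Z,X],Y) = -B(X,[Z,Y])`). -/
theorem stmt7
    (g : Type*) [LieRing g] [LieAlgebra ℝ g] [Module.Finite ℝ g]
    [LieAlgebra.IsSemisimple ℝ g]
    (B : g →ₗ[ℝ] g →ₗ[ℝ] ℝ)
    (hsymm : ∀ X Y : g, B X Y = B Y X)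
    (hposdef : ∀ X : g, X ≠ 0 → 0 < B X X)
    (hinv : ∀ Z X Y : g, B ⁅Z, X⁆ Y = -B X ⁅Z, Y⁆)
    (G : Type*) [Group G] (Ad : G →* (g ≃ₗ[ℝ] g))
    (hbr : ∀ (p : G) (X Y : g), Ad p ⁅X, Y⁆ = ⁅Ad p X, Ad p Y⁆)
    (θ₀ θ₁ : g →ₗ⁅ℝ⁆ g) (hθ₀ : ∀ X : g, θ₀ (θ₀ X) = X) (hθ₁ : ∀ X : g, θ₁ (θ₁ X) = X)
    (x₀ : g) (hx₀ : x₀ ≠ 0)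
    (M : Set g) (hM : M = Set.range fun p : G => Ad p x₀)
    (x : g) (hxM : x ∈ M) (hx0 : θ₀ x = -x) (hx1 : θ₁ x = -x)
    (htrans : ∀ v : g, (∃ Z : g, ⁅Z, x⁆ = v) → θ₀ v = -v → θ₁ v = -v → v = 0) :
    ∀ y : g, θ₀ y = -y → θ₁ y = -y → ⁅x, y⁆ = 0 := by
  intro y hy0 hy1
  have hv : ⁅x, ⁅x, y⁆⁆ = 0 := by
    apply htrans
    · exact ⟨-⁅x, y⁆, by rw [neg_lie, ← lie_skew, neg_neg]⟩
    · have : θ₀ ⁅x, y⁆ = ⁅x, y⁆ := by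
        rw [LieHom.map_lie, hx0, hy0, neg_lie, lie_neg, neg_neg]
      rw [LieHom.map_lie, hx0, this, neg_lie]
    · have : θ₁ ⁅x, y⁆ = ⁅x, y⁆ := by
        rw [LieHom.map_lie, hx1, hy1, neg_lie, lie_neg, neg_neg]
      rw [LieHom.map_lie, hx1, this, neg_lie]
  by_contra h
  have := hposdef _ h
  rw [hinv x y ⁅x, y⁆, hv] at this
  simp at this
end

section
/- Let S_α ∈ k, T_α ∈ p, λ ∈ a satisfy [H,S_α] = ⟨λ,H⟩T_α, [H,T_α] = -⟨λ,H⟩S_α for all H ∈ a, [S_α,T_α] = λ, with |S_α| = |T_α| = 1. Then for X ∈ a and t ∈ ℝ, Ad(exp tS_α)X = X + (⟨λ,X⟩/|λ|²)(cos(t|λ|) - 1)λ - (⟨λ,X⟩/|λ|) sin(t|λ|) T_α. -/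
open scoped RealInnerProductSpace

/-!
For `H ∈ a` the bracket `[S_α, H] = -⟪λ, H⟫ T_α` only sees the component of `H` along `λ`, so
`X - (⟪λ, X⟫ / ‖λ‖²) λ` is a stationary point of `Y' = [S_α, Y]`, while on the plane spanned by
`λ` and `‖λ‖ T_α` the map `ad S_α` is a rotation with angular speed `‖λ‖`. The explicit curve
built from these two pieces solves the ODE, and solutions of a linear ODE in finite dimension are
unique.
-/

theorem LinearMap.eq_of_hasDerivAt_apply {E : Type*} [NormedAddCommGroup E] [NormedSpace ℝ E]
    [FiniteDimensional ℝ E] (A : E →ₗ[ℝ] E) {f g : ℝ → E} {t₀ : ℝ}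
    (hf : ∀ t, HasDerivAt f (A (f t)) t) (hg : ∀ t, HasDerivAt g (A (g t)) t)
    (h₀ : f t₀ = g t₀) : f = g :=
  ODE_solution_unique_univ (v := fun _ => A) (s := fun _ => Set.univ)
    (fun _ => (LinearMap.toContinuousLinearMap A).lipschitz.lipschitzOnWith)
    (fun t => ⟨hf t, trivial⟩) (fun t => ⟨hg t, trivial⟩) h₀

theorem hasDerivAt_cos_smul_sub_sin_smul {E : Type*} [NormedAddCommGroup E] [NormedSpace ℝ E]
    (A : E →ₗ[ℝ] E) {u v : E} {ω : ℝ} (hu : A u = -ω • v) (hv : A v = ω • u) (t : ℝ) :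
    HasDerivAt (fun s => Real.cos (s * ω) • u - Real.sin (s * ω) • v)
      (A (Real.cos (t * ω) • u - Real.sin (t * ω) • v)) t := by
  refine ((hasDerivAt_mul_const ω).cos.smul_const u).sub
    ((hasDerivAt_mul_const ω).sin.smul_const v) |>.congr_deriv ?_
  rw [map_sub, map_smul, map_smul, hu, hv]
  module

theorem inner_div_norm_sq_mul_norm_sq {E : Type*} [NormedAddCommGroup E] [InnerProductSpace ℝ E]
    (u x : E) : ⟪u, x⟫ / ‖u‖ ^ 2 * ‖u‖ ^ 2 = ⟪u, x⟫ := by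
  rcases eq_or_ne u 0 with rfl | hu
  · simp
  · field_simp [norm_ne_zero_iff.mpr hu]

theorem stmt10_general
    (g : Type*) [NormedAddCommGroup g] [InnerProductSpace ℝ g] [FiniteDimensional ℝ g]
    (l : g →ₗ[ℝ] g →ₗ[ℝ] g)
    (hl_alt : ∀ X : g, l X X = 0)
    (a : Submodule ℝ g)
    (Sα Tα lam : g)
    (hlam : lam ∈ a)
    (hS : ∀ H ∈ a, l H Sα = ⟪lam, H⟫ • Tα)
    (hST : l Sα Tα = lam)
    (X : g) (hX : X ∈ a) (t : ℝ)
    (Y : ℝ → g)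
    (hY : ∀ s : ℝ, HasDerivAt Y (l Sα (Y s)) s)
    (hY0 : Y 0 = X) :
    Y t = X + ((⟪lam, X⟫ / ‖lam‖ ^ 2) * (Real.cos (t * ‖lam‖) - 1)) • lam
            - ((⟪lam, X⟫ / ‖lam‖) * Real.sin (t * ‖lam‖)) • Tα := by
  set n := ‖lam‖
  set c := ⟪lam, X⟫ / n ^ 2
  have hSa : ∀ H ∈ a, l Sα H = -⟪lam, H⟫ • Tα := fun H hH => by
    rw [← LinearMap.IsAlt.neg hl_alt, hS H hH, neg_smul]
  have hlam_rot : l Sα lam = -n • (n • Tα) := by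
    rw [hSa lam hlam, real_inner_self_eq_norm_sq, smul_smul, neg_mul, sq]
  have hT_rot : l Sα (n • Tα) = n • lam := by rw [map_smul, hST]
  have hker : l Sα (X - c • lam) = 0 := by
    rw [hSa _ (a.sub_mem hX (a.smul_mem c hlam)), inner_sub_right, real_inner_smul_right,
      real_inner_self_eq_norm_sq, inner_div_norm_sq_mul_norm_sq, sub_self, neg_zero, zero_smul]
  have hZ : ∀ s, HasDerivAt
      (fun s => (X - c • lam) + c • (Real.cos (s * n) • lam - Real.sin (s * n) • (n • Tα)))
      (l Sα ((X - c • lam) + c • (Real.cos (s * n) • lam - Real.sin (s * n) • (n • Tα)))) s :=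
    fun s => ((hasDerivAt_cos_smul_sub_sin_smul _ hlam_rot hT_rot s).const_smul c).const_add
      (X - c • lam) |>.congr_deriv (by rw [map_add, hker, zero_add, map_smul])
  rw [LinearMap.eq_of_hasDerivAt_apply _ hY hZ (t₀ := 0) (by simp [hY0])]
  have hcn : ⟪lam, X⟫ / n = c * n := by
    rcases eq_or_ne n 0 with hn | hn
    · simp [c, hn]
    · simp only [c]; field_simp
  rw [hcn]
  module

/-- Let `g` be a compact semisimple Lie algebra with `Ad`-invariant inner
product, `g = k ⊕ p` a canonical decomposition for an involution `θ`, `a` a maximal abelian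
subspace of `p`, and let `S_α ∈ k`, `T_α ∈ p`, `λ ∈ a` satisfy `[H,S_α] = ⟪λ,H⟫ T_α`,
`[H,T_α] = -⟪λ,H⟫ S_α` for all `H ∈ a`, `[S_α,T_α] = λ`, with `‖S_α‖ = ‖T_α‖ = 1`.
Then for `X ∈ a` and `t ∈ ℝ`, `Ad(exp tS_α)X` — the time-`t` value of the solution of the
ODE `Y' = [S_α, Y]`, `Y 0 = X` — equals
`X + (⟪λ,X⟫/‖λ‖²)(cos(t‖λ‖) - 1) λ - (⟪λ,X⟫/‖λ‖) sin(t‖λ‖) T_α`. -/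
theorem stmt10
    (g : Type*) [NormedAddCommGroup g] [InnerProductSpace ℝ g] [FiniteDimensional ℝ g]
    (l : g →ₗ[ℝ] g →ₗ[ℝ] g)
    (hl_alt : ∀ X : g, l X X = 0)
    (hl_jacobi : ∀ X Y Z : g, l X (l Y Z) = l (l X Y) Z + l Y (l X Z))
    (hinner : ∀ Z X Y : g, ⟪l Z X, Y⟫ = -⟪X, l Z Y⟫)
    (θ : g →ₗ[ℝ] g)
    (hθinv : ∀ X : g, θ (θ X) = X)
    (hθaut : ∀ X Y : g, θ (l X Y) = l (θ X) (θ Y))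
    (a : Submodule ℝ g)
    (hap : ∀ v ∈ a, θ v = -v)
    (habelian : ∀ u ∈ a, ∀ v ∈ a, l u v = 0)
    (hamax : ∀ v : g, θ v = -v → (∀ u ∈ a, l u v = 0) → v ∈ a)
    (Sα Tα lam : g)
    (hSk : θ Sα = Sα) (hTp : θ Tα = -Tα) (hlam : lam ∈ a) (hlam0 : lam ≠ 0)
    (hS : ∀ H ∈ a, l H Sα = ⟪lam, H⟫ • Tα)
    (hT : ∀ H ∈ a, l H Tα = -⟪lam, H⟫ • Sα)
    (hST : l Sα Tα = lam)
    (hSnorm : ‖Sα‖ = 1) (hTnorm : ‖Tα‖ = 1)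
    (X : g) (hX : X ∈ a) (t : ℝ)
    (Y : ℝ → g)
    (hY : ∀ s : ℝ, HasDerivAt Y (l Sα (Y s)) s)
    (hY0 : Y 0 = X) :
    Y t = X + ((⟪lam, X⟫ / ‖lam‖ ^ 2) * (Real.cos (t * ‖lam‖) - 1)) • lam
            - ((⟪lam, X⟫ / ‖lam‖) * Real.sin (t * ‖lam‖)) • Tα :=
  stmt10_general g l hl_alt a Sα Tα lam hlam hS hST X hX t Y hY hY0
end

section
/- Let θ₀ and θ₁ be commuting involutions of a compact semisimple Lie algebra g with canonical decompositions g = kᵢ ⊕ pᵢ, and let a be a maximal abelian subspace of p₀ ∩ p₁. If a₀ is a maximal abelian subspace of p₀ containing a, then a₀ is invariant under θ₁. -/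
/-!
For `H ∈ a₀` the element `H - θ₁ H` lies in `p₀ ∩ p₁`, and it centralizes `a`: `a` commutes with
`H` because `a ⊆ a₀`, and with `θ₁ H` because `θ₁ ⁅X, θ₁ H⁆ = -⁅X, H⁆ = 0` for `X ∈ a`.
Maximality of `a` puts `H - θ₁ H` into `a ⊆ a₀`, hence `θ₁ H = H - (H - θ₁ H) ∈ a₀`.
-/

section Involution

variable {M F : Type*} [AddCommGroup M] [FunLike F M M] [AddMonoidHomClass F M M]

theorem map_sub_map_self_eq_neg {θ : F} (hθ : Function.Involutive θ) (H : M) :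
    θ (H - θ H) = -(H - θ H) := by
  rw [map_sub, hθ H, neg_sub]

theorem map_sub_map_eq_neg_of_commute {θ₀ θ₁ : F} (hcomm : ∀ X, θ₀ (θ₁ X) = θ₁ (θ₀ X))
    {H : M} (hH : θ₀ H = -H) : θ₀ (H - θ₁ H) = -(H - θ₁ H) := by
  rw [map_sub, hcomm, hH, map_neg, neg_sub_neg, neg_sub]

end Involution

theorem LieHom.lie_map_eq_zero_of_involutive {R L : Type*} [CommRing R] [LieRing L]
    [LieAlgebra R L] {θ : L →ₗ⁅R⁆ L} (hθ : Function.Involutive θ) {X H : L} (hX : θ X = -X)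
    (hXH : ⁅X, H⁆ = 0) : ⁅X, θ H⁆ = 0 := by
  apply hθ.injective
  rw [LieHom.map_lie, hθ H, hX, neg_lie, hXH, neg_zero, map_zero]

theorem stmt11_general
    (g : Type*) [LieRing g] [LieAlgebra ℝ g]
    (θ₀ θ₁ : g →ₗ⁅ℝ⁆ g)
    (hθ₁ : ∀ X : g, θ₁ (θ₁ X) = X)
    (hcomm : ∀ X : g, θ₀ (θ₁ X) = θ₁ (θ₀ X))
    (a : Submodule ℝ g)
    (hap : ∀ v ∈ a, θ₀ v = -v ∧ θ₁ v = -v)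
    (hamax : ∀ v : g, θ₀ v = -v → θ₁ v = -v → (∀ u ∈ a, ⁅u, v⁆ = 0) → v ∈ a)
    (a₀ : Submodule ℝ g) (haa₀ : a ≤ a₀)
    (ha₀p : ∀ v ∈ a₀, θ₀ v = -v)
    (ha₀abelian : ∀ u ∈ a₀, ∀ v ∈ a₀, ⁅u, v⁆ = 0) :
    ∀ H ∈ a₀, θ₁ H ∈ a₀ := by
  intro H hH
  have hcentral : ∀ X ∈ a, ⁅X, H - θ₁ H⁆ = 0 := fun X hX => by
    have hXH := ha₀abelian X (haa₀ hX) H hH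
    rw [lie_sub, hXH, LieHom.lie_map_eq_zero_of_involutive hθ₁ (hap X hX).2 hXH, sub_zero]
  have hmem : H - θ₁ H ∈ a :=
    hamax _ (map_sub_map_eq_neg_of_commute hcomm (ha₀p H hH)) (map_sub_map_self_eq_neg hθ₁ H)
      hcentral
  simpa only [sub_sub_cancel] using a₀.sub_mem hH (haa₀ hmem)

/-- Let `θ₀` and `θ₁` be commuting involutions of a compact semisimple
Lie algebra `g` with canonical decompositions `g = kᵢ ⊕ pᵢ` (`pᵢ = {X | θᵢX = -X}`), and
let `a` be a maximal abelian subspace of `p₀ ∩ p₁`.  If `a₀` is a maximal abelian subspace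
of `p₀` containing `a`, then `a₀` is invariant under `θ₁`. -/
theorem stmt11
    (g : Type*) [LieRing g] [LieAlgebra ℝ g] [Module.Finite ℝ g]
    [LieAlgebra.IsSemisimple ℝ g]
    (θ₀ θ₁ : g →ₗ⁅ℝ⁆ g)
    (hθ₀ : ∀ X : g, θ₀ (θ₀ X) = X) (hθ₁ : ∀ X : g, θ₁ (θ₁ X) = X)
    (hcomm : ∀ X : g, θ₀ (θ₁ X) = θ₁ (θ₀ X))
    (a : Submodule ℝ g)
    (hap : ∀ v ∈ a, θ₀ v = -v ∧ θ₁ v = -v)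
    (habelian : ∀ u ∈ a, ∀ v ∈ a, ⁅u, v⁆ = 0)
    (hamax : ∀ v : g, θ₀ v = -v → θ₁ v = -v → (∀ u ∈ a, ⁅u, v⁆ = 0) → v ∈ a)
    (a₀ : Submodule ℝ g) (haa₀ : a ≤ a₀)
    (ha₀p : ∀ v ∈ a₀, θ₀ v = -v)
    (ha₀abelian : ∀ u ∈ a₀, ∀ v ∈ a₀, ⁅u, v⁆ = 0)
    (ha₀max : ∀ v : g, θ₀ v = -v → (∀ u ∈ a₀, ⁅u, v⁆ = 0) → v ∈ a₀) :
    ∀ H ∈ a₀, θ₁ H ∈ a₀ :=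
  stmt11_general g θ₀ θ₁ hθ₁ hcomm a hap hamax a₀ haa₀ ha₀p ha₀abelian
end

section
/- Let θ₀ and θ₁ be commuting involutions of a compact semisimple Lie algebra g, a a maximal abelian subspace of p₀ ∩ p₁, and aᵢ a maximal abelian subspace of pᵢ containing a for i = 0,1. Then a₀ + a₁ is an abelian subspace of g, i.e., [a₀, a₁] = {0}. -/
/-!
Write `pᵢ` and `kᵢ` for the `-1` and `+1` eigenspaces of `θᵢ`. For `X ∈ a₀`, the element
`X - θ₁ X` lies in `p₀ ∩ p₁` and commutes with `a`, so it lies in `a` by maximality; hence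
`a₀ = a + (a₀ ∩ k₁)` and likewise `a₁ = a + (a₁ ∩ k₀)`. It remains to see that
`Z = [X, Y]` vanishes for `X ∈ a₀ ∩ k₁` and `Y ∈ a₁ ∩ k₀`. Such a `Z` lies in `p₀ ∩ p₁` and
commutes with `a`, so `Z ∈ a ⊆ a₀` and `[X, Z] = 0`; invariance of the inner product then gives
`B(Z, Z) = -B(Y, [X, Z]) = 0`.
-/

section Involution

variable {M F : Type*} [AddCommGroup M] [FunLike F M M] [AddMonoidHomClass F M M]
  {θ σ : F} {x : M}

theorem map_sub_map_eq_neg_of_commute_s12 (hcomm : Function.Commute θ σ) (hx : θ x = -x) :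
    θ (x - σ x) = -(x - σ x) := by
  rw [map_sub, hcomm x, hx, map_neg]
  abel

theorem map_add_map_eq_neg_of_commute (hcomm : Function.Commute θ σ) (hx : θ x = -x) :
    θ (x + σ x) = -(x + σ x) := by
  rw [map_add, hcomm x, hx, map_neg]
  abel

theorem map_sub_self_eq_neg_of_involutive (hσ : Function.Involutive σ) :
    σ (x - σ x) = -(x - σ x) := by
  rw [map_sub, hσ x]
  abel

theorem map_add_self_eq_self_of_involutive (hσ : Function.Involutive σ) :
    σ (x + σ x) = x + σ x := by
  rw [map_add, hσ x, add_comm]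

end Involution

theorem LinearMap.BilinForm.lie_eq_zero_of_lie_lie_eq_zero {R L M : Type*} [CommRing R]
    [LieRing L] [AddCommGroup M] [Module R M] [LieRingModule L M]
    {Φ : LinearMap.BilinForm R M} (hΦ : Φ.lieInvariant L) (hΦ_aniso : ∀ m, Φ m m = 0 → m = 0)
    {x : L} {m : M} (h : ⁅x, ⁅x, m⁆⁆ = 0) : ⁅x, m⁆ = 0 :=
  hΦ_aniso _ <| by rw [hΦ, h, map_zero, neg_zero]

namespace LieHom

variable {R L : Type*} [CommRing R] [LieRing L] [LieAlgebra R L] {θ₀ θ₁ : L →ₗ⁅R⁆ L}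

theorem lie_apply_eq_zero_of_apply_eq_neg {u v : L} (hu : θ₀ u = -u) (h : ⁅u, v⁆ = 0) :
    ⁅u, θ₀ v⁆ = 0 := by
  have := congrArg θ₀ h
  rwa [map_lie, hu, map_zero, neg_lie, neg_eq_zero] at this

variable {a a₀ a₁ : Submodule R L}
  (hamax : ∀ v : L, θ₀ v = -v → θ₁ v = -v → (∀ u ∈ a, ⁅u, v⁆ = 0) → v ∈ a)
  (haa₀ : a ≤ a₀) (ha₀p : ∀ v ∈ a₀, θ₀ v = -v) (ha₀abelian : ∀ u ∈ a₀, ∀ v ∈ a₀, ⁅u, v⁆ = 0)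
include hamax haa₀ ha₀p ha₀abelian

theorem sub_apply_mem_of_maximal (hθ₁ : Function.Involutive θ₁)
    (hcomm : Function.Commute θ₀ θ₁) (ha₁ : ∀ u ∈ a, θ₁ u = -u) {X : L} (hX : X ∈ a₀) :
    X - θ₁ X ∈ a := by
  refine hamax _ (map_sub_map_eq_neg_of_commute_s12 hcomm (ha₀p X hX))
    (map_sub_self_eq_neg_of_involutive hθ₁) fun u hu => ?_
  have hXu : ⁅u, X⁆ = 0 := ha₀abelian u (haa₀ hu) X hX
  rw [lie_sub, hXu, lie_apply_eq_zero_of_apply_eq_neg (ha₁ u hu) hXu, sub_zero]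

theorem lie_eq_zero_of_apply_eq_self {Φ : LinearMap.BilinForm R L} (hΦ : Φ.lieInvariant L)
    (hΦ_aniso : ∀ x, Φ x x = 0 → x = 0) (haa₁ : a ≤ a₁) (ha₁p : ∀ v ∈ a₁, θ₁ v = -v)
    (ha₁abelian : ∀ u ∈ a₁, ∀ v ∈ a₁, ⁅u, v⁆ = 0) {X Y : L} (hX : X ∈ a₀) (hθ₁X : θ₁ X = X)
    (hY : Y ∈ a₁) (hθ₀Y : θ₀ Y = Y) : ⁅X, Y⁆ = 0 := by
  have hZ : ⁅X, Y⁆ ∈ a := by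
    refine hamax _ (by rw [map_lie, ha₀p X hX, hθ₀Y, neg_lie])
      (by rw [map_lie, hθ₁X, ha₁p Y hY, lie_neg]) fun u hu => ?_
    rw [leibniz_lie, ha₀abelian u (haa₀ hu) X hX, ha₁abelian u (haa₁ hu) Y hY, zero_lie,
      lie_zero, add_zero]
  exact Φ.lie_eq_zero_of_lie_lie_eq_zero hΦ hΦ_aniso (ha₀abelian X hX _ (haa₀ hZ))

end LieHom

open LieHom in
theorem stmt12_general
    (g : Type*) [LieRing g] [LieAlgebra ℝ g]
    (B : g →ₗ[ℝ] g →ₗ[ℝ] ℝ)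
    (hposdef : ∀ X : g, X ≠ 0 → 0 < B X X)
    (hinv : ∀ Z X Y : g, B ⁅Z, X⁆ Y = -B X ⁅Z, Y⁆)
    (θ₀ θ₁ : g →ₗ⁅ℝ⁆ g)
    (hθ₀ : ∀ X : g, θ₀ (θ₀ X) = X) (hθ₁ : ∀ X : g, θ₁ (θ₁ X) = X)
    (hcomm : ∀ X : g, θ₀ (θ₁ X) = θ₁ (θ₀ X))
    (a : Submodule ℝ g)
    (hamax : ∀ v : g, θ₀ v = -v → θ₁ v = -v → (∀ u ∈ a, ⁅u, v⁆ = 0) → v ∈ a)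
    (a₀ a₁ : Submodule ℝ g) (haa₀ : a ≤ a₀) (haa₁ : a ≤ a₁)
    (ha₀p : ∀ v ∈ a₀, θ₀ v = -v) (ha₁p : ∀ v ∈ a₁, θ₁ v = -v)
    (ha₀abelian : ∀ u ∈ a₀, ∀ v ∈ a₀, ⁅u, v⁆ = 0)
    (ha₁abelian : ∀ u ∈ a₁, ∀ v ∈ a₁, ⁅u, v⁆ = 0) :
    ∀ X ∈ a₀, ∀ Y ∈ a₁, ⁅X, Y⁆ = 0 := by
  intro X hX Y hY
  have hB_aniso : ∀ Z, B Z Z = 0 → Z = 0 := fun Z hZ => by_contra fun h => (hposdef Z h).ne' hZ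
  have hamax' : ∀ v : g, θ₁ v = -v → θ₀ v = -v → (∀ u ∈ a, ⁅u, v⁆ = 0) → v ∈ a :=
    fun v h₁ h₀ => hamax v h₀ h₁
  have hA : X - θ₁ X ∈ a := sub_apply_mem_of_maximal hamax haa₀ ha₀p ha₀abelian hθ₁ hcomm
    (fun u hu => ha₁p u (haa₁ hu)) hX
  have hB : Y - θ₀ Y ∈ a := sub_apply_mem_of_maximal hamax' haa₁ ha₁p ha₁abelian hθ₀
    (Function.Commute.symm hcomm) (fun u hu => ha₀p u (haa₀ hu)) hY
  have hX' : X + θ₁ X ∈ a₀ := add_mem hX ((a₀.sub_mem_iff_right hX).mp (haa₀ hA))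
  have hY' : Y + θ₀ Y ∈ a₁ := add_mem hY ((a₁.sub_mem_iff_right hY).mp (haa₁ hB))
  have hX'Y' : ⁅X + θ₁ X, Y + θ₀ Y⁆ = 0 :=
    lie_eq_zero_of_apply_eq_self hamax haa₀ ha₀p ha₀abelian (Φ := B) hinv hB_aniso
      haa₁ ha₁p ha₁abelian hX' (map_add_self_eq_self_of_involutive hθ₁)
      hY' (map_add_self_eq_self_of_involutive hθ₀)
  have h4 : (4 : ℝ) • ⁅X, Y⁆ = ⁅X - θ₁ X, Y - θ₀ Y⁆ + ⁅X - θ₁ X, Y + θ₀ Y⁆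
      + ⁅X + θ₁ X, Y - θ₀ Y⁆ + ⁅X + θ₁ X, Y + θ₀ Y⁆ := by
    simp only [lie_add, add_lie, lie_sub, sub_lie]
    module
  rw [ha₀abelian _ (haa₀ hA) _ (haa₀ hB), ha₁abelian _ (haa₁ hA) _ hY',
    ha₀abelian _ hX' _ (haa₀ hB), hX'Y'] at h4
  simpa using h4

/-- Let `θ₀` and `θ₁` be commuting involutions of a compact semisimple
Lie algebra `g` (with a fixed `Ad`-invariant inner product `B`), `a` a maximal abelian
subspace of `p₀ ∩ p₁`, and `aᵢ` a maximal abelian subspace of `pᵢ` containing `a` for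
`i = 0, 1`.  Then `a₀ + a₁` is an abelian subspace of `g`, i.e. `[a₀, a₁] = {0}`. -/
theorem stmt12
    (g : Type*) [LieRing g] [LieAlgebra ℝ g] [Module.Finite ℝ g]
    [LieAlgebra.IsSemisimple ℝ g]
    (B : g →ₗ[ℝ] g →ₗ[ℝ] ℝ)
    (hsymm : ∀ X Y : g, B X Y = B Y X)
    (hposdef : ∀ X : g, X ≠ 0 → 0 < B X X)
    (hinv : ∀ Z X Y : g, B ⁅Z, X⁆ Y = -B X ⁅Z, Y⁆)
    (θ₀ θ₁ : g →ₗ⁅ℝ⁆ g)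
    (hθ₀ : ∀ X : g, θ₀ (θ₀ X) = X) (hθ₁ : ∀ X : g, θ₁ (θ₁ X) = X)
    (hcomm : ∀ X : g, θ₀ (θ₁ X) = θ₁ (θ₀ X))
    (a : Submodule ℝ g)
    (hap : ∀ v ∈ a, θ₀ v = -v ∧ θ₁ v = -v)
    (habelian : ∀ u ∈ a, ∀ v ∈ a, ⁅u, v⁆ = 0)
    (hamax : ∀ v : g, θ₀ v = -v → θ₁ v = -v → (∀ u ∈ a, ⁅u, v⁆ = 0) → v ∈ a)
    (a₀ a₁ : Submodule ℝ g) (haa₀ : a ≤ a₀) (haa₁ : a ≤ a₁)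
    (ha₀p : ∀ v ∈ a₀, θ₀ v = -v) (ha₁p : ∀ v ∈ a₁, θ₁ v = -v)
    (ha₀abelian : ∀ u ∈ a₀, ∀ v ∈ a₀, ⁅u, v⁆ = 0)
    (ha₁abelian : ∀ u ∈ a₁, ∀ v ∈ a₁, ⁅u, v⁆ = 0)
    (ha₀max : ∀ v : g, θ₀ v = -v → (∀ u ∈ a₀, ⁅u, v⁆ = 0) → v ∈ a₀)
    (ha₁max : ∀ v : g, θ₁ v = -v → (∀ u ∈ a₁, ⁅u, v⁆ = 0) → v ∈ a₁) :
    ∀ X ∈ a₀, ∀ Y ∈ a₁, ⁅X, Y⁆ = 0 :=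
  stmt12_general g B hposdef hinv θ₀ θ₁ hθ₀ hθ₁ hcomm a hamax a₀ a₁ haa₀ haa₁ ha₀p ha₁p ha₀abelian
    ha₁abelian
end
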